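/- arXiv:cs/0110040 — 4 statements merged into one kernel-verified Lean document; each statement's English description precedes it below -/
import Mathlib

section
/- A language L ⊆ Σ* is accepted by some finite automaton if and only if the right-invariant equivalence relation x ∼ y defined by (∀ z ∈ Σ*, xz ∈ L ↔ yz ∈ L) has finitely many equivalence classes. -/
/-! The Nerode class of `x` is the fibre of `y ↦ y⁻¹L` through `x`, so the classes are in
bijection with the left quotients of `L`, and a language is regular iff it has finitely many
left quotients (`Language.isRegular_iff_finite_range_leftQuotient`). -/

noncomputable def Function.rangeEquivFibers {β γ : Type*} (f : β → γ) :
    Set.range f ≃ {S : Set β // ∃ x, S = f ⁻¹' {f x}} :=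
  Equiv.ofBijective (fun c => ⟨f ⁻¹' {c.1}, c.2.imp fun x hx => by rw [hx]⟩) <| by
    constructor
    · rintro ⟨c, x, rfl⟩ ⟨c', x', rfl⟩ h
      have hfib : f ⁻¹' {f x} = f ⁻¹' {f x'} := congrArg Subtype.val h
      have hx : x ∈ f ⁻¹' {f x'} := hfib ▸ rfl
      exact Subtype.ext hx
    · rintro ⟨S, x, rfl⟩
      exact ⟨⟨f x, x, rfl⟩, rfl⟩

theorem Language.setOf_forall_append_mem_iff_eq_preimage {α : Type*} (L : Language α)
    (x : List α) :
    {y : List α | ∀ z : List α, x ++ z ∈ L ↔ y ++ z ∈ L} =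
      L.leftQuotient ⁻¹' {L.leftQuotient x} := by
  ext y
  simp only [Set.mem_ofPred_eq, Set.mem_preimage, Set.mem_singleton_iff, Language.ext_iff,
    Language.mem_leftQuotient]
  exact forall_congr' fun z => Iff.comm

theorem myhill_nerode_general {α : Type} (L : Language α) :
    L.IsRegular ↔
      Finite { S : Set (List α) // ∃ x : List α,
        S = { y : List α | ∀ z : List α, x ++ z ∈ L ↔ y ++ z ∈ L } } := by
  simp_rw [L.setOf_forall_append_mem_iff_eq_preimage]
  rw [← (Function.rangeEquivFibers L.leftQuotient).finite_iff, Set.finite_coe_iff]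
  exact Language.isRegular_iff_finite_range_leftQuotient

/-- Myhill–Nerode: a language `L` over a finite nonempty alphabet is accepted by a finite
automaton iff the right-invariant equivalence `x ∼ y ↔ ∀ z, xz ∈ L ↔ yz ∈ L` has finitely
many equivalence classes. -/
theorem myhill_nerode {α : Type} [Fintype α] [Nonempty α] (L : Language α) :
    L.IsRegular ↔
      Finite { S : Set (List α) // ∃ x : List α,
        S = { y : List α | ∀ z : List α, x ++ z ∈ L ↔ y ++ z ∈ L } } :=
  myhill_nerode_general L
end

section
/- If L ⊆ Σ* is regular, then there exists a constant c (depending only on L) such that for every x ∈ Σ* and every n ≥ 1, if y is the n-th string (in a fixed computable enumeration of Σ*) belonging to L_x = { y : xy ∈ L }, then C(y) ≤ C(n) + c. -/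
/-- Plain conditional Kolmogorov complexity `C(x|y)` relative to the machine `φ`:
the length of a shortest program `p` with `φ p y = x`. -/
noncomputable def kolC (φ : List Bool → List Bool → Part (List Bool)) (x y : List Bool) : ℕ :=
  sInf {n | ∃ p : List Bool, p.length = n ∧ x ∈ φ p y}

/-- Unconditional Kolmogorov complexity `C(x) = C(x|ε)`. -/
noncomputable def kolCp (φ : List Bool → List Bool → Part (List Bool)) (x : List Bool) : ℕ :=
  kolC φ x []

/-- `φ` is a universal partial computable function: it is partial computable and
simulates every partial computable `ψ` with at most constant overhead in program length. -/
def IsUniversal (φ : List Bool → List Bool → Part (List Bool)) : Prop :=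
  Partrec₂ φ ∧ ∀ ψ : List Bool → List Bool → Part (List Bool), Partrec₂ ψ →
    ∃ c : ℕ, ∀ p y x, x ∈ ψ p y → ∃ q : List Bool, x ∈ φ q y ∧ q.length ≤ p.length + c

/-- The `k`-th binary string in length-lexicographic order (standard bijection `ℕ ≃ {0,1}*`). -/
def natToStr (n : ℕ) : List Bool := (Nat.bits (n + 1)).reverse.tail

/-! The left quotients `L_x = {y | x ++ y ∈ L}` of a regular language are regular (they are the
languages accepted from the states of a DFA for `L`) and there are only finitely many of them.
Membership in a regular language is primitive recursive, so for each quotient a single machine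
turns a description of `n` into its `n`-th member, by walking through the enumeration and counting
members. Universality charges a constant overhead for each of these finitely many machines; their
maximum is the constant of the theorem. -/

namespace Nat

theorem bits_injective : Function.Injective Nat.bits := fun m n h =>
  Nat.digits.injective 2 <| by rw [digits_two_eq_bits, digits_two_eq_bits, h]

theorem exists_bits_eq_append_true {n : ℕ} (hn : n ≠ 0) : ∃ t, n.bits = t ++ [true] := by
  induction n using Nat.binaryRec' with
  | zero => exact absurd rfl hn
  | bit b n h ih =>
    rw [bits_append_bit _ _ h]
    rcases eq_or_ne n 0 with rfl | hn'
    · exact ⟨[], by simp [h rfl]⟩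
    · obtain ⟨t, ht⟩ := ih hn'
      exact ⟨b :: t, by rw [ht, List.cons_append]⟩

theorem bits_eq_cons_of_ne_zero {n : ℕ} (hn : n ≠ 0) :
    n.bits = (n % 2 == 1) :: (n / 2).bits := by
  conv_lhs => rw [← bit_bodd_div2 n]
  rw [bits_append_bit, div2_val, mod_two_of_bodd]
  · cases n.bodd <;> rfl
  · intro h
    have := bit_bodd_div2 n
    cases hb : n.bodd <;> simp_all [bit]

end Nat

theorem Primrec.nat_bits : Primrec Nat.bits := by
  let g : List (List Bool) → Option (List Bool) := fun l =>
    some (if l.length = 0 then [] else (l.length % 2 == 1) :: l.getD (l.length / 2) [])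
  have hg : Primrec g := by
    refine option_some.comp (ite (Primrec.eq.comp list_length (const 0)) (const [])
      (list_cons.comp (Primrec.beq.comp (nat_mod.comp list_length (const 2)) (const 1))
        ((list_getD []).comp .id (nat_div.comp list_length (const 2)))))
  have := nat_strong_rec (fun (_ : Unit) => Nat.bits) (g := fun _ => g) (hg.comp snd) fun _ n => by
    rcases eq_or_ne n 0 with rfl | hn
    · simp [g]
    · simp [g, hn, Nat.bits_eq_cons_of_ne_zero hn, List.getD_eq_getElem?_getD,
        List.getElem?_map, List.getElem?_range (Nat.div_lt_self (Nat.pos_of_ne_zero hn) one_lt_two)]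
  exact this.comp (const ()) .id

theorem bits_succ_eq_natToStr (n : ℕ) : (n + 1).bits = (natToStr n).reverse ++ [true] := by
  obtain ⟨t, ht⟩ := Nat.exists_bits_eq_append_true n.succ_ne_zero
  simp [natToStr, ht]

theorem natToStr_injective : Function.Injective natToStr := fun m n h =>
  Nat.succ_injective <| Nat.bits_injective <| by
    rw [bits_succ_eq_natToStr, h, bits_succ_eq_natToStr]

theorem Primrec.natToStr : Primrec natToStr :=
  list_tail.comp (list_reverse.comp (nat_bits.comp succ))

theorem Primrec.nat_count {p : ℕ → Prop} [DecidablePred p] (hp : PrimrecPred p) :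
    Primrec (Nat.count p) :=
  (list_length.comp ((listFilter hp).comp list_range)).of_eq fun n => by
    simp [Nat.count, List.countP_eq_length_filter]

theorem Nat.ncard_setOf_le_and (p : ℕ → Prop) [DecidablePred p] (k : ℕ) :
    {j | j ≤ k ∧ p j}.ncard = Nat.count p (k + 1) := by
  rw [Nat.count_eq_card_filter_range, ← Set.ncard_coe_finset]
  congr 1
  ext j
  simp

theorem Nat.count_succ_lt_count_succ {p : ℕ → Prop} [DecidablePred p] {j k : ℕ} (hk : p k)
    (hjk : j < k) : Nat.count p (j + 1) < Nat.count p (k + 1) :=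
  (Nat.count_monotone p hjk).trans_lt (Nat.count_strict_mono hk k.lt_succ_self)

theorem Nat.mem_rfind_count_succ_eq {p : ℕ → Prop} [DecidablePred p] {k : ℕ} (hk : p k) :
    k ∈ Nat.rfind fun j => Part.some (decide (p j ∧ count p (j + 1) = count p (k + 1))) := by
  refine Nat.mem_rfind.2 ⟨by simp [hk], fun hjk => ?_⟩
  simp [(count_succ_lt_count_succ hk hjk).ne]

theorem DFA.primrec_eval {α σ : Type*} [Primcodable α] [Finite α] [Primcodable σ] [Finite σ]
    (M : DFA α σ) : Primrec M.eval :=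
  (Primrec.list_foldl .id (.const M.start)
    ((Primrec.dom_finite fun q : σ × α => M.step q.1 q.2).comp .snd).to₂).of_eq fun _ => rfl

theorem Language.IsRegular.primrecPred_mem {α : Type*} [Primcodable α] [Finite α]
    {L : Language α} (hL : L.IsRegular) : PrimrecPred (· ∈ L) := by
  classical
  obtain ⟨σ, _, M, rfl⟩ := hL
  -- reindexed so that the states are `Primcodable`
  let M' := DFA.reindex (Fintype.equivFin σ) M
  have hacc : PrimrecPred (· ∈ M'.accept) := (Primrec.dom_finite _).primrecPred
  exact (hacc.comp M'.primrec_eval).of_eq fun w => by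
    rw [← DFA.mem_accepts, DFA.accepts_reindex]

theorem Language.IsRegular.leftQuotient {α : Type*} {L : Language α} (hL : L.IsRegular)
    (x : List α) : (L.leftQuotient x).IsRegular :=
  .of_finite_range_leftQuotient <| hL.finite_range_leftQuotient.subset <| by
    rintro _ ⟨y, rfl⟩
    exact ⟨x ++ y, L.leftQuotient_append x y⟩

section Kolmogorov

variable {φ : List Bool → List Bool → Part (List Bool)}

theorem kolC_le_length {p x y : List Bool} (h : x ∈ φ p y) : kolC φ x y ≤ p.length :=
  Nat.sInf_le ⟨p, rfl, h⟩

theorem IsUniversal.exists_length_eq_kolC (hφ : IsUniversal φ) (x y : List Bool) :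
    ∃ p, p.length = kolC φ x y ∧ x ∈ φ p y := by
  obtain ⟨c, hc⟩ := hφ.2 (fun _ _ => Part.some x) (Partrec.const' _)
  obtain ⟨q, hq, -⟩ := hc [] y x (Part.mem_some x)
  exact Nat.sInf_mem (s := {n | ∃ p : List Bool, p.length = n ∧ x ∈ φ p y})
    ⟨q.length, q, rfl, hq⟩

theorem IsUniversal.exists_kolC_le_of_partrec (hφ : IsUniversal φ) {f : List Bool →. List Bool}
    (hf : Partrec f) : ∃ c, ∀ x y z, z ∈ f x → kolC φ z y ≤ kolC φ x y + c := by
  obtain ⟨c, hc⟩ := hφ.2 (fun p y => (φ p y).bind f) (hφ.1.bind (hf.comp Computable.snd).to₂)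
  refine ⟨c, fun x y z hz => ?_⟩
  obtain ⟨p, hp, hx⟩ := hφ.exists_length_eq_kolC x y
  obtain ⟨q, hq, hqp⟩ := hc p y z (Part.mem_bind hx hz)
  exact (kolC_le_length hq).trans (hp ▸ hqp)

theorem IsUniversal.exists_kolCp_le_kolCp_count (hφ : IsUniversal φ) {p : ℕ → Prop}
    [DecidablePred p] (hp : PrimrecPred p) :
    ∃ c, ∀ k, p k → kolCp φ (natToStr k) ≤ kolCp φ (natToStr (Nat.count p (k + 1))) + c := by
  let search : List Bool →. List Bool := fun s =>
    (Nat.rfind fun j => Part.some (decide (p j ∧ natToStr (Nat.count p (j + 1)) = s))).map natToStr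
  have hsearch : Partrec search := by
    refine .map (.rfind ?_) (Primrec.natToStr.comp .snd).to_comp.to₂
    have hcount : Primrec fun q : List Bool × ℕ => natToStr (Nat.count p (q.2 + 1)) :=
      Primrec.natToStr.comp ((Primrec.nat_count hp).comp (Primrec.succ.comp .snd))
    exact Computable₂.partrec₂ <| Primrec.to_comp <| PrimrecPred.decide <|
      (hp.comp .snd).and (Primrec.eq.comp hcount .fst)
  obtain ⟨c, hc⟩ := hφ.exists_kolC_le_of_partrec hsearch
  refine ⟨c, fun k hk => hc _ _ _ (Part.mem_map _ ?_)⟩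
  simpa only [natToStr_injective.eq_iff] using Nat.mem_rfind_count_succ_eq hk

end Kolmogorov

/-- KC-Regularity Lemma: if `L` is regular then there is a constant `c` such that for every
`x` and every `n ≥ 1`, if `y` is the `n`-th string (in the length-lexicographic enumeration
of `{0,1}*`) belonging to `L_x = {y : xy ∈ L}`, then `C(y) ≤ C(n) + c`. -/
theorem kc_regularity (φ : List Bool → List Bool → Part (List Bool))
    (hφ : IsUniversal φ) (L : Language Bool) (hL : L.IsRegular) :
    ∃ c : ℕ, ∀ (x y : List Bool) (n k : ℕ), 1 ≤ n →
      y = natToStr k → x ++ y ∈ L →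
      { j : ℕ | j ≤ k ∧ x ++ natToStr j ∈ L }.ncard = n →
      kolCp φ y ≤ kolCp φ (natToStr n) + c := by
  classical
  have hquot : ∀ L' ∈ Set.range L.leftQuotient, ∃ c, ∀ k, natToStr k ∈ L' →
      kolCp φ (natToStr k) ≤ kolCp φ (natToStr (Nat.count (natToStr · ∈ L') (k + 1))) + c := by
    rintro _ ⟨x, rfl⟩
    exact hφ.exists_kolCp_le_kolCp_count <|
      (hL.leftQuotient x).primrecPred_mem.comp Primrec.natToStr
  choose! c hc using hquot
  obtain ⟨C, hC⟩ := (hL.finite_range_leftQuotient.image c).bddAbove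
  refine ⟨C, fun x y n k _ hy hxy hn => ?_⟩
  subst hy
  have hcount : Nat.count (natToStr · ∈ L.leftQuotient x) (k + 1) = n := by
    rw [← Nat.ncard_setOf_le_and, ← hn]
    rfl
  calc kolCp φ (natToStr k) ≤ kolCp φ (natToStr n) + c (L.leftQuotient x) :=
        hcount ▸ hc _ ⟨x, rfl⟩ k hxy
    _ ≤ kolCp φ (natToStr n) + C := by gcongr; exact hC ⟨_, ⟨x, rfl⟩, rfl⟩
end

section
/- The language of standard binary representations of prime numbers is not regular. -/
/-!
If the language were regular, the pumping lemma applied to `binRep p` for a prime `p > 2 ^ n`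
(`n` the pumping length) would split it as `a ++ b ++ c` with `b ≠ []` and `2 ^ |b| < p` such that
every `a ++ b ^ k ++ c` is the binary representation of a prime. Take `k = p`. By Fermat,
`2 ^ (p * |b|) ≡ 2 ^ |b| (mod p)`, and `2 ^ |b| - 1` is invertible mod `p`, so the geometric sum
shows that the block `b ^ p` has the same value as `b` mod `p`. Hence the prime encoded by
`a ++ b ^ p ++ c` is divisible by `p`, i.e. equals `p`, although its representation is longer
than `binRep p`.
-/

/-- The standard binary representation (most significant bit first, no leading zeros) of a
natural number `p`: the little-endian binary expansion `Nat.bits p`, reversed. -/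
def binRep (p : ℕ) : List Bool := (Nat.bits p).reverse

theorem List.length_flatten_replicate {α : Type*} (l : List α) (k : ℕ) :
    (List.replicate k l).flatten.length = k * l.length := by
  simp

theorem Language.IsRegular.pumping_lemma {α : Type*} {L : Language α} (hL : L.IsRegular) :
    ∃ n, ∀ x ∈ L, n ≤ x.length → ∃ a b c, x = a ++ b ++ c ∧ a.length + b.length ≤ n ∧
      b ≠ [] ∧ ∀ k, a ++ (List.replicate k b).flatten ++ c ∈ L := by
  obtain ⟨σ, _, M, rfl⟩ := hL
  refine ⟨Fintype.card σ, fun x hx hlen => ?_⟩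
  obtain ⟨a, b, c, hx, hab, hb, hpump⟩ := M.pumping_lemma hx hlen
  refine ⟨a, b, c, hx, hab, hb, fun k => hpump ?_⟩
  refine Language.append_mem_mul (Language.append_mem_mul rfl ?_) rfl
  exact Language.join_mem_kstar fun y hy => List.eq_of_mem_replicate hy

def ofBits (l : List Bool) : ℕ := l.foldl (fun n b => 2 * n + b.toNat) 0

@[simp] theorem ofBits_nil : ofBits [] = 0 := rfl

theorem ofBits_concat (l : List Bool) (b : Bool) :
    ofBits (l ++ [b]) = 2 * ofBits l + b.toNat := by
  simp [ofBits]

theorem ofBits_append (u v : List Bool) :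
    ofBits (u ++ v) = ofBits u * 2 ^ v.length + ofBits v := by
  induction v using List.reverseRecOn with
  | nil => simp
  | append_singleton v b ih =>
    rw [← List.append_assoc, ofBits_concat, ofBits_concat, ih, List.length_append,
      List.length_singleton, pow_succ]
    ring

theorem ofBits_binRep (p : ℕ) : ofBits (binRep p) = p := by
  induction p using Nat.binaryRec' with
  | zero => simp [binRep]
  | bit b n hn ih =>
    rw [binRep, Nat.bits_append_bit n b hn, List.reverse_cons, ofBits_concat, ← binRep, ih,
      Nat.bit_val]

theorem length_binRep (p : ℕ) : (binRep p).length = p.size := by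
  rw [binRep, List.length_reverse, Nat.size_eq_bits_len]

theorem geom_mul_ofBits_flatten_replicate {R : Type*} [CommRing R] (b : List Bool) (k : ℕ) :
    ((2 : R) ^ b.length - 1) * ofBits (List.replicate k b).flatten =
      ofBits b * (2 ^ (k * b.length) - 1) := by
  induction k with
  | zero => simp
  | succ k ih =>
    rw [List.replicate_succ, List.flatten_cons, ofBits_append, List.length_flatten_replicate]
    push_cast
    rw [add_mul, pow_add]
    linear_combination ih

theorem ofBits_pump_prime_cast {p : ℕ} [Fact p.Prime] (a b c : List Bool)
    (hb : (2 : ZMod p) ^ b.length ≠ 1) :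
    (ofBits (a ++ (List.replicate p b).flatten ++ c) : ZMod p) = ofBits (a ++ b ++ c) := by
  have hfermat : (2 : ZMod p) ^ (p * b.length) = 2 ^ b.length := by
    rw [pow_mul, ZMod.pow_card]
  have hblock : (ofBits (List.replicate p b).flatten : ZMod p) = ofBits b := by
    refine mul_left_cancel₀ (sub_ne_zero.mpr hb) ?_
    rw [geom_mul_ofBits_flatten_replicate, hfermat, mul_comm]
  simp only [ofBits_append, List.length_flatten_replicate]
  push_cast
  rw [hfermat, hblock]

theorem two_pow_ne_one_of_lt {p m : ℕ} (hm : m ≠ 0) (hmp : 2 ^ m < p) : (2 : ZMod p) ^ m ≠ 1 := by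
  have h1 := Nat.one_lt_two_pow hm
  rw [← Nat.cast_ofNat, ← Nat.cast_pow, ← Nat.cast_one, Ne, ZMod.natCast_eq_natCast_iff',
    Nat.mod_eq_of_lt hmp, Nat.mod_eq_of_lt (by omega)]
  exact h1.ne'

/-- The language of binary representations of primes is not regular. -/
theorem binary_primes_not_regular :
    ¬ Language.IsRegular { w : List Bool | ∃ p : ℕ, p.Prime ∧ w = binRep p } := by
  intro hreg
  obtain ⟨n, hpump⟩ := hreg.pumping_lemma
  obtain ⟨p, hnp, hp⟩ := Nat.exists_infinite_primes (2 ^ n + 1)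
  have : Fact p.Prime := ⟨hp⟩
  have hlen : n ≤ (binRep p).length := by
    rw [length_binRep]
    exact (Nat.lt_size.mpr (by omega)).le
  obtain ⟨a, b, c, hsplit, habn, hb, hmem⟩ := hpump _ ⟨p, hp, rfl⟩ hlen
  have hb0 : b.length ≠ 0 := by simpa using hb
  have hbp : 2 ^ b.length < p := (Nat.pow_le_pow_right two_pos (by omega)).trans_lt hnp
  obtain ⟨q, hq, hw⟩ := hmem p
  have hpq : p ∣ q := by
    rw [← ZMod.natCast_eq_zero_iff, ← ofBits_binRep q, ← hw,
      ofBits_pump_prime_cast a b c (two_pow_ne_one_of_lt hb0 hbp), ← hsplit, ofBits_binRep,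
      ZMod.natCast_self]
  obtain rfl := (Nat.prime_dvd_prime_iff_eq hp hq).mp hpq
  have hlen_eq := congrArg List.length (hw.trans hsplit)
  simp only [List.length_append, List.length_flatten_replicate] at hlen_eq
  have := hp.two_le
  have : 0 < b.length := Nat.pos_of_ne_zero hb0
  nlinarith
end

section
/- For each constant c, there are only finitely many one-way infinite binary sequences ω such that for all n, C(ω_{1:n}) ≤ log n + c; in fact their number is bounded by 2^{c + O(1)}. -/
/-!
For `2 ^ k ≤ n < 2 ^ (k + 1)` we have `log n ≤ k + 1`, so the prefixes of these lengths of
sequences satisfying `C(ω_{1:n}) ≤ log n + c` all have complexity at most `k + 1 + c`, and fewer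
than `2 ^ (k + c + 2)` strings do. The prefixes of a finite family `F` of such sequences become
pairwise distinct from some length on; choosing `2 ^ k` beyond it gives `2 ^ k * |F|` distinct
such prefixes, hence `|F| < 2 ^ (c + 2)`.
-/

open Filter

theorem List.ncard_setOf_length_eq (α : Type*) [Fintype α] (n : ℕ) :
    {l : List α | l.length = n}.ncard = Fintype.card α ^ n := by
  rw [← Nat.card_coe_set_eq, ← card_vector, ← Nat.card_eq_fintype_card]
  rfl

theorem List.ncard_setOf_length_lt_lt (α : Type*) [Fintype α] (hα : 2 ≤ Fintype.card α)
    (n : ℕ) : {l : List α | l.length < n}.ncard < Fintype.card α ^ n := by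
  have hunion : {l : List α | l.length < n} = ⋃ k : Fin n, {l | l.length = (k : ℕ)} := by
    ext l
    simp only [Set.mem_ofPred_eq, Set.mem_iUnion]
    exact ⟨fun h => ⟨⟨l.length, h⟩, rfl⟩, fun ⟨k, hk⟩ => hk ▸ k.2⟩
  calc {l : List α | l.length < n}.ncard
      ≤ ∑ k : Fin n, {l : List α | l.length = (k : ℕ)}.ncard :=
        hunion ▸ Set.ncard_iUnion_le_of_fintype _
    _ = ∑ k ∈ Finset.range n, Fintype.card α ^ k := by
        simp only [List.ncard_setOf_length_eq]
        exact Fin.sum_univ_eq_sum_range (Fintype.card α ^ ·) n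
    _ < Fintype.card α ^ n := Nat.geomSum_lt hα fun k hk => Finset.mem_range.1 hk

theorem length_natToStr_le_of_lt {n k : ℕ} (h : n + 1 < 2 ^ (k + 1)) :
    (natToStr n).length ≤ k := by
  have hsize : (n + 1).size ≤ k + 1 := Nat.size_le.2 h
  rw [natToStr, List.length_tail, List.length_reverse, Nat.size_eq_bits_len]
  omega

theorem Set.finite_and_ncard_le_of_forall_finset_card_le {α : Type*} {s : Set α} {B : ℕ}
    (h : ∀ F : Finset α, ↑F ⊆ s → F.card ≤ B) : s.Finite ∧ s.ncard ≤ B := by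
  have hfin : s.Finite := by
    by_contra hinf
    obtain ⟨F, hFs, hF⟩ := Set.Infinite.exists_subset_card_eq hinf (B + 1)
    exact absurd (h F hFs) (by omega)
  exact ⟨hfin, by simpa [Set.ncard_eq_toFinset_card s hfin] using h hfin.toFinset (by simp)⟩

theorem eventually_injOn_map_range {α : Type*} (F : Finset (ℕ → α)) :
    ∀ᶠ n in atTop, Set.InjOn (fun ω => (List.range n).map ω) (F : Set (ℕ → α)) := by
  suffices h : ∀ q ∈ F ×ˢ F, ∀ᶠ n in atTop,
      (List.range n).map q.1 = (List.range n).map q.2 → q.1 = q.2 by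
    filter_upwards [(eventually_all_finset _).2 h] with n hn ω hω ω' hω' heq
    exact hn (ω, ω') (Finset.mem_product.2 ⟨hω, hω'⟩) heq
  rintro ⟨ω, ω'⟩ -
  by_cases hne : ω = ω'
  · exact Eventually.of_forall fun _ _ => hne
  obtain ⟨i, hi⟩ := Function.ne_iff.1 hne
  filter_upwards [eventually_gt_atTop i] with n hn heq
  exact absurd (List.map_inj_left.1 heq i (List.mem_range.2 hn)) hi

section Complexity

variable {φ : List Bool → List Bool → Part (List Bool)}

theorem IsUniversal.exists_program (hφ : IsUniversal φ) (x y : List Bool) : ∃ p, x ∈ φ p y := by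
  have hprint : Partrec₂ fun (p _ : List Bool) => Part.some p :=
    (Computable.to₂ Computable.fst).partrec₂
  obtain ⟨c, hc⟩ := hφ.2 _ hprint
  obtain ⟨q, hq, -⟩ := hc x y x (Part.mem_some x)
  exact ⟨q, hq⟩

theorem IsUniversal.exists_program_length_eq_kolC (hφ : IsUniversal φ) (x y : List Bool) :
    ∃ p : List Bool, p.length = kolC φ x y ∧ x ∈ φ p y := by
  obtain ⟨p, hp⟩ := hφ.exists_program x y
  exact Nat.sInf_mem (s := {n | ∃ p : List Bool, p.length = n ∧ x ∈ φ p y})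
    ⟨p.length, p, rfl, hp⟩

theorem IsUniversal.card_lt_two_pow_of_kolC_lt (hφ : IsUniversal φ) {y : List Bool}
    {T : Finset (List Bool)} {L : ℕ} (hT : ∀ x ∈ T, kolC φ x y < L) : T.card < 2 ^ L := by
  choose p hp_len hp_mem using fun x => hφ.exists_program_length_eq_kolC x y
  have hinj : Set.InjOn p T := fun x _ x' _ h => Part.mem_unique (hp_mem x) (h ▸ hp_mem x')
  have hmaps : ∀ x ∈ (T : Set (List Bool)), p x ∈ {l : List Bool | l.length < L} :=
    fun x hx => (hp_len x).trans_lt (hT x hx)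
  calc T.card = (T : Set (List Bool)).ncard := (Set.ncard_coe_finset T).symm
    _ ≤ {l : List Bool | l.length < L}.ncard :=
        Set.ncard_le_ncard_of_injOn p hmaps hinj (List.finite_length_lt Bool L)
    _ < 2 ^ L := List.ncard_setOf_length_lt_lt Bool le_rfl L

def LogCompressible (φ : List Bool → List Bool → Part (List Bool)) (c : ℕ) (ω : ℕ → Bool) :
    Prop :=
  ∀ n, kolCp φ ((List.range n).map ω) ≤ (natToStr n).length + c

theorem IsUniversal.card_lt_of_forall_logCompressible (hφ : IsUniversal φ) {c : ℕ}
    {F : Finset (ℕ → Bool)} (hF : ∀ ω ∈ F, LogCompressible φ c ω) : F.card < 2 ^ (c + 2) := by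
  obtain ⟨N, hN⟩ := eventually_atTop.1 (eventually_injOn_map_range F)
  set m := 2 ^ N with hm
  have hNm : N ≤ m := Nat.lt_two_pow_self.le
  have hm4 : 2 ^ (N + 2) = 4 * m := by rw [hm]; ring
  have hinj : Set.InjOn (fun q : (ℕ → Bool) × ℕ => (List.range (m + q.2)).map q.1)
      (F ×ˢ Finset.range m : Finset _) := by
    rintro ⟨ω, i⟩ hωi ⟨ω', i'⟩ hωi' heq
    simp only [Finset.coe_product, Set.mem_prod] at hωi hωi'
    have hi : i = i' := by simpa using congrArg List.length heq
    subst hi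
    exact Prod.ext (hN (m + i) (by omega) hωi.1 hωi'.1 heq) rfl
  set T := (F ×ˢ Finset.range m).image fun q => (List.range (m + q.2)).map q.1
  have hT : ∀ x ∈ T, kolCp φ x < N + c + 2 := by
    simp only [T, Finset.mem_image, Finset.mem_product, Finset.mem_range]
    rintro _ ⟨⟨ω, i⟩, ⟨hω, hi⟩, rfl⟩
    have hlog := length_natToStr_le_of_lt (n := m + i) (k := N + 1) (by omega)
    have hω := hF ω hω (m + i)
    dsimp only
    omega
  have hcard : F.card * m < 2 ^ (c + 2) * m := calc
    F.card * m = T.card := by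
      rw [Finset.card_image_of_injOn hinj, Finset.card_product, Finset.card_range]
    _ < 2 ^ (N + c + 2) := hφ.card_lt_two_pow_of_kolC_lt hT
    _ = 2 ^ (c + 2) * m := by rw [hm, ← pow_add]; ring_nf
  exact Nat.lt_of_mul_lt_mul_right hcard

end Complexity

/-- For each constant `c` there are only finitely many infinite binary sequences `ω` with
`C(ω_{1:n}) ≤ log n + c` for all `n`; in fact their number is at most `2^{c+O(1)}`. -/
theorem finitely_many_logcompressible (φ : List Bool → List Bool → Part (List Bool))
    (hφ : IsUniversal φ) :
    ∃ d : ℕ, ∀ c : ℕ,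
      { ω : ℕ → Bool | ∀ n : ℕ,
          kolCp φ ((List.range n).map ω) ≤ (natToStr n).length + c }.Finite ∧
      { ω : ℕ → Bool | ∀ n : ℕ,
          kolCp φ ((List.range n).map ω) ≤ (natToStr n).length + c }.ncard ≤ 2 ^ (c + d) :=
  ⟨2, fun _ => Set.finite_and_ncard_le_of_forall_finset_card_le fun _ hF =>
    (hφ.card_lt_of_forall_logCompressible fun _ hω => hF hω).le⟩
end
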